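/- arXiv:1704.07598 — 2 statements merged into one kernel-verified Lean document; each statement's English description precedes it below -/
import Mathlib

section
/- If X is a geodesic metric space and every geodesic segment in X is N-Morse for a fixed Morse gauge N, then X is δ-hyperbolic for some δ depending only on N. In particular one may take δ = 4·N(3,0), in the sense that all geodesic triangles in X are 4·N(3,0)-slim. -/
open Metric Set

/-- A `(λ, ε)`-quasi-geodesic defined on the interval `[a,b]`. -/
def IsQuasiGeodesicOn {X : Type*} [MetricSpace X] (lam eps a b : ℝ) (σ : ℝ → X) : Prop :=
  ∀ s ∈ Set.Icc a b, ∀ t ∈ Set.Icc a b,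
    (1 / lam) * |s - t| - eps ≤ dist (σ s) (σ t) ∧ dist (σ s) (σ t) ≤ lam * |s - t| + eps

/-- A geodesic segment from `x` to `y`, parametrized by arclength on `[0, dist x y]`. -/
def IsGeodesicSegment {X : Type*} [MetricSpace X] (γ : ℝ → X) (x y : X) : Prop :=
  γ 0 = x ∧ γ (dist x y) = y ∧
    ∀ s ∈ Set.Icc (0:ℝ) (dist x y), ∀ t ∈ Set.Icc (0:ℝ) (dist x y),
      dist (γ s) (γ t) = |s - t|

/-- A geodesic metric space: any two points are joined by a geodesic segment. -/
def GeodesicSpace (X : Type*) [MetricSpace X] : Prop :=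
  ∀ x y : X, ∃ γ : ℝ → X, IsGeodesicSegment γ x y

/-- A geodesic ray, parametrized by arclength on `[0, ∞)`. -/
def IsGeodesicRay {X : Type*} [MetricSpace X] (γ : ℝ → X) : Prop :=
  ∀ s ∈ Set.Ici (0:ℝ), ∀ t ∈ Set.Ici (0:ℝ), dist (γ s) (γ t) = |s - t|

/-- A set `im` (the image of a geodesic) is `N`-Morse for a Morse gauge `N : ℝ → ℝ → ℝ` if
every `(λ,ε)`-quasi-geodesic (`λ ≥ 1`, `ε ≥ 0`) with endpoints on `im` stays in the
`N λ ε`-neighborhood of `im`. -/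
def IsMorseWith {X : Type*} [MetricSpace X] (N : ℝ → ℝ → ℝ) (im : Set X) : Prop :=
  ∀ lam eps : ℝ, 1 ≤ lam → 0 ≤ eps → ∀ a b : ℝ, a ≤ b → ∀ σ : ℝ → X,
    IsQuasiGeodesicOn lam eps a b σ → σ a ∈ im → σ b ∈ im →
    ∀ t ∈ Set.Icc a b, Metric.infDist (σ t) im ≤ N lam eps

/-- An `N`-Morse geodesic ray. -/
def IsMorseRay {X : Type*} [MetricSpace X] (N : ℝ → ℝ → ℝ) (γ : ℝ → X) : Prop :=
  IsGeodesicRay γ ∧ IsMorseWith N (γ '' Set.Ici 0)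

/-- An `N`-Morse geodesic segment from `x` to `y`. -/
def IsMorseSegment {X : Type*} [MetricSpace X] (N : ℝ → ℝ → ℝ) (γ : ℝ → X) (x y : X) : Prop :=
  IsGeodesicSegment γ x y ∧ IsMorseWith N (γ '' Set.Icc 0 (dist x y))

/-- A geodesic triangle with vertices `x, y, z` and sides `γ₁ : x→y`, `γ₂ : y→z`, `γ₃ : z→x`
is `δ`-slim if each side lies in the `δ`-neighborhood of the union of the other two sides. -/
def TriangleIsSlim {X : Type*} [MetricSpace X] (δ : ℝ) (x y z : X) (γ₁ γ₂ γ₃ : ℝ → X) : Prop :=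
  (∀ s ∈ Set.Icc (0:ℝ) (dist x y),
    Metric.infDist (γ₁ s) (γ₂ '' Set.Icc 0 (dist y z) ∪ γ₃ '' Set.Icc 0 (dist z x)) ≤ δ) ∧
  (∀ s ∈ Set.Icc (0:ℝ) (dist y z),
    Metric.infDist (γ₂ s) (γ₁ '' Set.Icc 0 (dist x y) ∪ γ₃ '' Set.Icc 0 (dist z x)) ≤ δ) ∧
  (∀ s ∈ Set.Icc (0:ℝ) (dist z x),
    Metric.infDist (γ₃ s) (γ₁ '' Set.Icc 0 (dist x y) ∪ γ₂ '' Set.Icc 0 (dist y z)) ≤ δ)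

/-! Let `p = γ₁ s` lie on the side from `x` to `y`, and let `q` be the first point of the side
`γ₂` (run from `y`) with `d(x, q) ≤ s`, or, if there is none, the point of `γ₂` closest to `x`.
A geodesic `α` from `x` to `q`, followed by `γ₂` run back to `y`, never comes closer to `x` than
its length, so it is a `(3,0)`-quasi-geodesic from `x` to `y`; Morse-ness of `γ₁` puts `α s`
within `N(3,0)` of `γ₁`, hence within `2·N(3,0)` of `p`. In the first case `α s = q ∈ γ₂`. In
the second, `α` followed by `γ₂` run on to `z` is a `(3,0)`-quasi-geodesic from `x` to `z`, so
`α s` is also `N(3,0)`-close to `γ₃`. -/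

noncomputable def concatAt {X : Type*} (a : ℝ) (β₁ β₂ : ℝ → X) (t : ℝ) : X :=
  if t ≤ a then β₁ t else β₂ (t - a)

lemma concatAt_of_le {X : Type*} {a t : ℝ} {β₁ β₂ : ℝ → X} (ht : t ≤ a) :
    concatAt a β₁ β₂ t = β₁ t :=
  if_pos ht

lemma concatAt_add {X : Type*} {a₁ a₂ : ℝ} {β₁ β₂ : ℝ → X} (ha₂ : 0 ≤ a₂) (hj : β₁ a₁ = β₂ 0) :
    concatAt a₁ β₁ β₂ (a₁ + a₂) = β₂ a₂ := by
  rcases ha₂.eq_or_lt with rfl | hpos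
  · rw [add_zero, concatAt_of_le le_rfl, hj]
  · rw [concatAt, if_neg (by linarith), add_sub_cancel_left]

section

variable {X : Type*} [MetricSpace X]

def IsGeodesicOn (a : ℝ) (β : ℝ → X) : Prop :=
  ∀ s ∈ Icc 0 a, ∀ t ∈ Icc 0 a, dist (β s) (β t) = |s - t|

namespace IsGeodesicOn

variable {a : ℝ} {β : ℝ → X}

lemma dist_eq_sub (h : IsGeodesicOn a β) {s t : ℝ} (hs : s ∈ Icc 0 a) (ht : t ∈ Icc 0 a)
    (hst : s ≤ t) : dist (β s) (β t) = t - s := by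
  rw [h s hs t ht, abs_sub_comm, abs_of_nonneg (sub_nonneg.2 hst)]

lemma dist_zero (h : IsGeodesicOn a β) {t : ℝ} (ht : t ∈ Icc 0 a) : dist (β 0) (β t) = t := by
  rw [h.dist_eq_sub ⟨le_rfl, ht.1.trans ht.2⟩ ht ht.1, sub_zero]

lemma continuousOn (h : IsGeodesicOn a β) : ContinuousOn β (Icc 0 a) :=
  (LipschitzOnWith.of_dist_le_mul (K := 1) fun s hs t ht => by
    rw [h s hs t ht, NNReal.coe_one, one_mul, Real.dist_eq]).continuousOn

lemma reverse (h : IsGeodesicOn a β) {v : ℝ} (hv : v ∈ Icc 0 a) :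
    IsGeodesicOn v (fun w => β (v - w)) := fun s hs t ht => by
  rw [h (v - s) ⟨by linarith [hs.2], by linarith [hs.1, hv.2]⟩
    (v - t) ⟨by linarith [ht.2], by linarith [ht.1, hv.2]⟩, ← abs_neg]
  ring_nf

lemma shift (h : IsGeodesicOn a β) {v : ℝ} (hv : v ∈ Icc 0 a) :
    IsGeodesicOn (a - v) (fun w => β (v + w)) := fun s hs t ht => by
  rw [h (v + s) ⟨by linarith [hs.1, hv.1], by linarith [hs.2]⟩
    (v + t) ⟨by linarith [ht.1, hv.1], by linarith [ht.2]⟩]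
  ring_nf

end IsGeodesicOn

namespace IsGeodesicSegment

variable {γ : ℝ → X} {x y : X}

lemma isGeodesicOn (h : IsGeodesicSegment γ x y) : IsGeodesicOn (dist x y) γ := h.2.2

lemma left_mem_image (h : IsGeodesicSegment γ x y) : x ∈ γ '' Icc 0 (dist x y) :=
  ⟨0, ⟨le_rfl, dist_nonneg⟩, h.1⟩

lemma right_mem_image (h : IsGeodesicSegment γ x y) : y ∈ γ '' Icc 0 (dist x y) :=
  ⟨dist x y, ⟨dist_nonneg, le_rfl⟩, h.2.1⟩

lemma dist_left (h : IsGeodesicSegment γ x y) {t : ℝ} (ht : t ∈ Icc 0 (dist x y)) :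
    dist x (γ t) = t := by
  rw [← h.1]; exact h.isGeodesicOn.dist_zero ht

lemma dist_le_two_mul_infDist (h : IsGeodesicSegment γ x y) {s : ℝ} (hs : s ∈ Icc 0 (dist x y))
    {w : X} (hw : dist x w = s) : dist (γ s) w ≤ 2 * infDist w (γ '' Icc 0 (dist x y)) := by
  have hne : (γ '' Icc 0 (dist x y)).Nonempty := ⟨x, h.left_mem_image⟩
  suffices dist (γ s) w / 2 ≤ infDist w (γ '' Icc 0 (dist x y)) by linarith
  refine (le_infDist hne).2 ?_
  rintro _ ⟨τ, hτ, rfl⟩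
  have hτs : |s - τ| ≤ dist w (γ τ) := by
    have := abs_dist_sub_le w (γ τ) x
    rwa [dist_comm w, dist_comm (γ τ), hw, h.dist_left hτ] at this
  have := dist_triangle (γ s) (γ τ) w
  rw [h.isGeodesicOn s hs τ hτ, dist_comm (γ τ)] at this
  linarith

end IsGeodesicSegment

lemma isQuasiGeodesicOn_of_le {lam eps a b : ℝ} {σ : ℝ → X}
    (h : ∀ s ∈ Icc a b, ∀ t ∈ Icc a b, s ≤ t →
      (1 / lam) * (t - s) - eps ≤ dist (σ s) (σ t) ∧ dist (σ s) (σ t) ≤ lam * (t - s) + eps) :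
    IsQuasiGeodesicOn lam eps a b σ := by
  intro s hs t ht
  rcases le_total s t with hst | hts
  · rw [abs_sub_comm, abs_of_nonneg (sub_nonneg.2 hst)]
    exact h s hs t ht hst
  · rw [abs_of_nonneg (sub_nonneg.2 hts), dist_comm]
    exact h t ht s hs hts

variable {β₁ β₂ : ℝ → X} {a₁ a₂ : ℝ}

lemma IsGeodesicOn.isQuasiGeodesicOn_concatAt (h₁ : IsGeodesicOn a₁ β₁)
    (h₂ : IsGeodesicOn a₂ β₂) (ha₁ : 0 ≤ a₁) (hj : β₁ a₁ = β₂ 0)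
    (hfar : ∀ t ∈ Icc 0 a₂, a₁ ≤ dist (β₁ 0) (β₂ t)) :
    IsQuasiGeodesicOn 3 0 0 (a₁ + a₂) (concatAt a₁ β₁ β₂) := by
  refine isQuasiGeodesicOn_of_le fun s hs t ht hst => ?_
  suffices (t - s) / 3 ≤ dist (concatAt a₁ β₁ β₂ s) (concatAt a₁ β₁ β₂ t) ∧
      dist (concatAt a₁ β₁ β₂ s) (concatAt a₁ β₁ β₂ t) ≤ t - s by
    constructor <;> linarith [this.1, this.2]
  unfold concatAt
  split_ifs with hsa hta hta
  · rw [h₁.dist_eq_sub ⟨hs.1, hsa⟩ ⟨ht.1, hta⟩ hst]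
    constructor <;> linarith
  · have hu : t - a₁ ∈ Icc 0 a₂ := ⟨by linarith, by linarith [ht.2]⟩
    have hsj : dist (β₁ s) (β₂ 0) = a₁ - s := by
      rw [← hj, h₁.dist_eq_sub ⟨hs.1, hsa⟩ ⟨ha₁, le_rfl⟩ hsa]
    -- The distance is at least `a₁ - s` (by `hfar`) and at least `(t - a₁) - (a₁ - s)`;
    -- the combination with weights `2/3, 1/3` is `(t - s) / 3`.
    have hjt := h₂.dist_zero hu
    have h0s := h₁.dist_zero ⟨hs.1, hsa⟩
    have := hfar _ hu
    have := dist_triangle (β₁ s) (β₂ 0) (β₂ (t - a₁))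
    have := dist_triangle (β₁ 0) (β₁ s) (β₂ (t - a₁))
    have := dist_triangle_left (β₂ 0) (β₂ (t - a₁)) (β₁ s)
    constructor <;> linarith
  · exact absurd (hst.trans hta) hsa
  · rw [h₂.dist_eq_sub ⟨by linarith, by linarith [hs.2]⟩ ⟨by linarith, by linarith [ht.2]⟩
      (by linarith)]
    constructor <;> linarith

lemma IsMorseWith.infDist_le_of_concatAt {N : ℝ → ℝ → ℝ} {im : Set X} (hM : IsMorseWith N im)
    (h₁ : IsGeodesicOn a₁ β₁) (h₂ : IsGeodesicOn a₂ β₂) (ha₁ : 0 ≤ a₁) (ha₂ : 0 ≤ a₂)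
    (hj : β₁ a₁ = β₂ 0) (hfar : ∀ t ∈ Icc 0 a₂, a₁ ≤ dist (β₁ 0) (β₂ t))
    (hstart : β₁ 0 ∈ im) (hend : β₂ a₂ ∈ im) {t : ℝ} (ht : t ∈ Icc 0 a₁) :
    infDist (β₁ t) im ≤ N 3 0 := by
  have := hM 3 0 (by norm_num) le_rfl 0 (a₁ + a₂) (by linarith)
    _ (h₁.isQuasiGeodesicOn_concatAt h₂ ha₁ hj hfar)
    (by rwa [concatAt_of_le ha₁]) (by rwa [concatAt_add ha₂ hj])
    t ⟨ht.1, by linarith [ht.2]⟩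
  rwa [concatAt_of_le ht.2] at this

lemma exists_eq_and_forall_le_of_continuousOn {f : ℝ → ℝ} {a b c : ℝ}
    (hf : ContinuousOn f (Icc a b)) (ha : c ≤ f a) (hb : ∃ v ∈ Icc a b, f v ≤ c) :
    ∃ v ∈ Icc a b, f v = c ∧ ∀ w ∈ Icc a v, c ≤ f w := by
  set S := Icc a b ∩ f ⁻¹' Iic c
  have hS : IsClosed S := hf.preimage_isClosed_of_isClosed isClosed_Icc isClosed_Iic
  have hSne : S.Nonempty := hb
  have hSbdd : BddBelow S := ⟨a, fun v hv => hv.1.1⟩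
  obtain ⟨hvI, hvc⟩ := hS.csInf_mem hSne hSbdd
  have hfirst : ∀ w ∈ Icc a b, f w ≤ c → sInf S ≤ w := fun w hw hwc => csInf_le hSbdd ⟨hw, hwc⟩
  have hsub : Icc a (sInf S) ⊆ Icc a b := Icc_subset_Icc_right hvI.2
  obtain ⟨u, hu, hfu⟩ := intermediate_value_Icc' hvI.1 (hf.mono hsub) ⟨hvc, ha⟩
  have hu_eq : u = sInf S := le_antisymm hu.2 (hfirst u (hsub hu) hfu.le)
  refine ⟨sInf S, hvI, hu_eq ▸ hfu, fun w hw => ?_⟩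
  rcases hw.2.eq_or_lt with rfl | hlt
  · rw [← hu_eq, hfu]
  · by_contra! hwc
    exact absurd (hfirst w (hsub hw) hwc.le) (not_le.2 hlt)

variable {N : ℝ → ℝ → ℝ} {x y : X} {γ₁ γ₂ α : ℝ → X}

lemma IsMorseWith.dist_le_of_closest_point (hM : IsMorseWith N (γ₁ '' Icc 0 (dist x y)))
    (h₁ : IsGeodesicSegment γ₁ x y) {b : ℝ} (h₂ : IsGeodesicOn b γ₂) (hy : γ₂ 0 = y)
    {w : ℝ} (hw : w ∈ Icc 0 b) (hα : IsGeodesicSegment α x (γ₂ w))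
    (hclosest : ∀ u ∈ Icc 0 w, dist x (γ₂ w) ≤ dist x (γ₂ u))
    {s : ℝ} (hs : s ∈ Icc 0 (dist x y)) (hsw : s ≤ dist x (γ₂ w)) :
    dist (γ₁ s) (α s) ≤ 2 * N 3 0 := by
  have hαs : infDist (α s) (γ₁ '' Icc 0 (dist x y)) ≤ N 3 0 :=
    hM.infDist_le_of_concatAt hα.isGeodesicOn (h₂.reverse hw) dist_nonneg hw.1
      (by rw [sub_zero, hα.2.1])
      (fun t ht => by rw [hα.1]; exact hclosest _ ⟨by linarith [ht.2], by linarith [ht.1]⟩)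
      (by rw [hα.1]; exact h₁.left_mem_image) (by rw [sub_self, hy]; exact h₁.right_mem_image)
      ⟨hs.1, hsw⟩
  have := h₁.dist_le_two_mul_infDist hs (hα.dist_left ⟨hs.1, hsw⟩)
  linarith

variable {z : X} {γ₃ : ℝ → X}

lemma infDist_side_le_of_isMorseWith (hX : GeodesicSpace X) (h₁ : IsGeodesicSegment γ₁ x y)
    (h₂ : IsGeodesicSegment γ₂ y z) (h₃ : IsGeodesicSegment γ₃ z x)
    (hM₁ : IsMorseWith N (γ₁ '' Icc 0 (dist x y))) (hM₃ : IsMorseWith N (γ₃ '' Icc 0 (dist z x)))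
    {s : ℝ} (hs : s ∈ Icc 0 (dist x y)) :
    infDist (γ₁ s) (γ₂ '' Icc 0 (dist y z) ∪ γ₃ '' Icc 0 (dist z x)) ≤ 4 * N 3 0 := by
  have hf : ContinuousOn (fun v => dist x (γ₂ v)) (Icc 0 (dist y z)) :=
    continuous_dist.comp_continuousOn (continuousOn_const.prodMk h₂.isGeodesicOn.continuousOn)
  by_cases hnear : ∃ v ∈ Icc 0 (dist y z), dist x (γ₂ v) ≤ s
  · obtain ⟨w, hw, hws, hfirst⟩ := exists_eq_and_forall_le_of_continuousOn hf
      (by simpa only [h₂.1] using hs.2) hnear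
    obtain ⟨α, hα⟩ := hX x (γ₂ w)
    have hclose := hM₁.dist_le_of_closest_point h₁ h₂.isGeodesicOn h₂.1 hw hα
      (fun u hu => hws ▸ hfirst u hu) hs hws.ge
    have hαs : α s = γ₂ w := by rw [← hws]; exact hα.2.1
    rw [hαs] at hclose
    calc infDist (γ₁ s) (γ₂ '' Icc 0 (dist y z) ∪ γ₃ '' Icc 0 (dist z x))
        ≤ dist (γ₁ s) (γ₂ w) := infDist_le_dist_of_mem (mem_union_left _ (mem_image_of_mem _ hw))
      _ ≤ 4 * N 3 0 := by linarith [dist_nonneg (x := γ₁ s) (y := γ₂ w)]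
  · push Not at hnear
    obtain ⟨w, hw, hmin⟩ := isCompact_Icc.exists_isMinOn (nonempty_Icc.2 dist_nonneg) hf
    have hclosest : ∀ u ∈ Icc 0 (dist y z), dist x (γ₂ w) ≤ dist x (γ₂ u) :=
      fun u hu => isMinOn_iff.1 hmin u hu
    have hsw : s ≤ dist x (γ₂ w) := (hnear w hw).le
    obtain ⟨α, hα⟩ := hX x (γ₂ w)
    have hclose := hM₁.dist_le_of_closest_point h₁ h₂.isGeodesicOn h₂.1 hw hα
      (fun u hu => hclosest u ⟨hu.1, hu.2.trans hw.2⟩) hs hsw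
    have hαs : infDist (α s) (γ₃ '' Icc 0 (dist z x)) ≤ N 3 0 :=
      hM₃.infDist_le_of_concatAt hα.isGeodesicOn (h₂.isGeodesicOn.shift hw) dist_nonneg
        (by linarith [hw.2]) (by rw [add_zero, hα.2.1])
        (fun t ht => by rw [hα.1]; exact hclosest _ ⟨by linarith [ht.1, hw.1], by linarith [ht.2]⟩)
        (by rw [hα.1]; exact h₃.right_mem_image)
        (by rw [add_sub_cancel, h₂.2.1]; exact h₃.left_mem_image) ⟨hs.1, hsw⟩
    calc infDist (γ₁ s) (γ₂ '' Icc 0 (dist y z) ∪ γ₃ '' Icc 0 (dist z x))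
        ≤ infDist (γ₁ s) (γ₃ '' Icc 0 (dist z x)) :=
          infDist_le_infDist_of_subset subset_union_right ⟨z, h₃.left_mem_image⟩
      _ ≤ infDist (α s) (γ₃ '' Icc 0 (dist z x)) + dist (γ₁ s) (α s) :=
          infDist_le_infDist_add_dist
      _ ≤ 4 * N 3 0 := by linarith [infDist_nonneg (x := α s) (s := γ₃ '' Icc 0 (dist z x))]

end

/-- If `X` is a geodesic metric space in which every geodesic segment is `N`-Morse for a fixed
Morse gauge `N`, then `X` is hyperbolic: every geodesic triangle is `4·N(3,0)`-slim. -/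
theorem hyperbolic_of_all_geodesics_morse {X : Type*} [MetricSpace X]
    (hX : GeodesicSpace X) (N : ℝ → ℝ → ℝ)
    (hN : ∀ (x y : X) (γ : ℝ → X), IsGeodesicSegment γ x y → IsMorseSegment N γ x y) :
    ∀ (x y z : X) (γ₁ γ₂ γ₃ : ℝ → X),
      IsGeodesicSegment γ₁ x y → IsGeodesicSegment γ₂ y z → IsGeodesicSegment γ₃ z x →
      TriangleIsSlim (4 * N 3 0) x y z γ₁ γ₂ γ₃ := by
  intro x y z γ₁ γ₂ γ₃ h₁ h₂ h₃
  have hM : ∀ {p q : X} {γ : ℝ → X}, IsGeodesicSegment γ p q →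
      IsMorseWith N (γ '' Icc 0 (dist p q)) := fun h => (hN _ _ _ h).2
  refine ⟨fun s hs => infDist_side_le_of_isMorseWith hX h₁ h₂ h₃ (hM h₁) (hM h₃) hs,
    fun s hs => ?_, fun s hs => infDist_side_le_of_isMorseWith hX h₃ h₁ h₂ (hM h₃) (hM h₂) hs⟩
  rw [union_comm]
  exact infDist_side_le_of_isMorseWith hX h₂ h₃ h₁ (hM h₂) (hM h₁) hs
end

section
/- Let X be a proper geodesic metric space and let γ : [0,∞) → X be a D-contracting geodesic ray. Then γ is N-Morse for a Morse gauge N depending only on D. (Contracting implies Morse.) -/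
/-!
Replace `D` by `D₀ = max D 0`, put `δ = 2 λ D₀ + 1` and `R = λ δ + ε`. A parameter step of length
at most `δ` moves a `(λ, ε)`-quasi-geodesic `σ` by at most `λ δ + ε = R`, so while `σ` stays
outside the `R`-neighbourhood of the ray, contraction moves its closest-point projection by less
than `D₀` per such step. Take a maximal excursion `[s, t']` of `σ` outside that neighbourhood; at
its ends `σ` is within `R + ε` of the ray. Chopping `[s, t']` into at most `(t' - s) / δ + 2` steps
gives `d(σ s, σ t') ≤ 2 (R + ε) + D₀ ((t' - s) / δ + 2)`, while the quasi-geodesic inequality gives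
`t' - s ≤ λ (d(σ s, σ t') + ε)`. As `λ D₀ / δ ≤ 1/2`, the length `t' - s` is bounded in terms of
`λ, ε, D` alone, and so is the distance from the ray of every point of the excursion.
-/

open Metric Set

/-- The set of closest-point projections of `x` to the set `im`. -/
def projSet {X : Type*} [MetricSpace X] (im : Set X) (x : X) : Set X :=
  {p ∈ im | dist x p = Metric.infDist x im}

/-- `im` (the image of a geodesic) is `D`-contracting: if `d(x,y) < d(x, π(x))` then
`diam (π(x) ∪ π(y)) < D`, where `π` is closest point projection to `im`. -/
def IsContractingSet {X : Type*} [MetricSpace X] (D : ℝ) (im : Set X) : Prop :=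
  ∀ x y : X, dist x y < Metric.infDist x im →
    Metric.diam (projSet im x ∪ projSet im y) < D

section Contracting

variable {X : Type*} [MetricSpace X] {S : Set X} {D : ℝ}

theorem projSet_subset_closedBall (S : Set X) (x : X) :
    projSet S x ⊆ closedBall x (infDist x S) :=
  fun _ hp => mem_closedBall'.2 hp.2.le

theorem IsClosed.projSet_nonempty [ProperSpace X] (hS : IsClosed S) (hne : S.Nonempty) (x : X) :
    (projSet S x).Nonempty := by
  obtain ⟨p, hpS, hp⟩ := hS.exists_infDist_eq_dist hne x
  exact ⟨p, hpS, hp.symm⟩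

theorem IsContractingSet.mono {D' : ℝ} (hS : IsContractingSet D S) (hD : D ≤ D') :
    IsContractingSet D' S :=
  fun x y hxy => (hS x y hxy).trans_le hD

theorem IsContractingSet.dist_lt (hS : IsContractingSet D S) {x y p q : X}
    (hxy : dist x y < infDist x S) (hp : p ∈ projSet S x) (hq : q ∈ projSet S y) :
    dist p q < D := by
  have hbdd : Bornology.IsBounded (projSet S x ∪ projSet S y) :=
    (isBounded_closedBall.subset (projSet_subset_closedBall S x)).union
      (isBounded_closedBall.subset (projSet_subset_closedBall S y))
  exact (dist_le_diam_of_mem hbdd (Or.inl hp) (Or.inr hq)).trans_lt (hS x y hxy)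

theorem IsContractingSet.dist_proj_le_of_chain (hS : IsContractingSet D S) {x p : ℕ → X}
    (hp : ∀ i, p i ∈ projSet S (x i)) {n : ℕ}
    (hstep : ∀ i < n, dist (x i) (x (i + 1)) < max (infDist (x i) S) (infDist (x (i + 1)) S)) :
    dist (p 0) (p n) ≤ n * D := by
  induction n with
  | zero => simp
  | succ n ih =>
    have hlast : dist (p n) (p (n + 1)) < D := by
      rcases lt_max_iff.1 (hstep n n.lt_succ_self) with h | h
      · exact hS.dist_lt h (hp n) (hp (n + 1))
      · rw [dist_comm]
        exact hS.dist_lt (by rwa [dist_comm]) (hp (n + 1)) (hp n)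
    have hprev := ih fun i hi => hstep i (hi.trans n.lt_succ_self)
    push_cast
    linarith [dist_triangle (p 0) (p n) (p (n + 1))]

theorem IsContractingSet.dist_le_of_chain (hS : IsContractingSet D S)
    (hproj : ∀ y, (projSet S y).Nonempty) {x : ℕ → X} {n : ℕ}
    (hstep : ∀ i < n, dist (x i) (x (i + 1)) < max (infDist (x i) S) (infDist (x (i + 1)) S)) :
    dist (x 0) (x n) ≤ infDist (x 0) S + n * D + infDist (x n) S := by
  choose p hp using fun i => hproj (x i)
  have hpp := hS.dist_proj_le_of_chain hp hstep
  calc dist (x 0) (x n) ≤ dist (x 0) (p 0) + dist (p 0) (p n) + dist (p n) (x n) :=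
        dist_triangle4 _ _ _ _
    _ = infDist (x 0) S + dist (p 0) (p n) + infDist (x n) S := by
        rw [(hp 0).2, dist_comm (p n), (hp n).2]
    _ ≤ infDist (x 0) S + n * D + infDist (x n) S := by gcongr

end Contracting

theorem IsGeodesicRay.isClosed_image {X : Type*} [MetricSpace X] {γ : ℝ → X}
    (hγ : IsGeodesicRay γ) : IsClosed (γ '' Ici 0) := by
  have hiso : Isometry fun u : Ici (0 : ℝ) => γ u := Isometry.of_dist_eq fun u v => by
    rw [hγ u u.2 v v.2, Subtype.dist_eq, Real.dist_eq]
  have : CompleteSpace (Ici (0 : ℝ)) := isClosed_Ici.completeSpace_coe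
  rw [image_eq_range]
  exact hiso.isClosedEmbedding.isClosed_range

section QuasiGeodesic

variable {X : Type*} [MetricSpace X] {lam eps a b : ℝ} {σ : ℝ → X}

theorem IsQuasiGeodesicOn.sub_le (hq : IsQuasiGeodesicOn lam eps a b σ) (hlam : 0 < lam)
    {s t : ℝ} (hs : s ∈ Icc a b) (ht : t ∈ Icc a b) (hst : s ≤ t) :
    t - s ≤ lam * (dist (σ s) (σ t) + eps) := by
  have h := (hq s hs t ht).1
  rw [abs_sub_comm, abs_of_nonneg (sub_nonneg.2 hst)] at h
  have : t - s = lam * (1 / lam * (t - s)) := by field_simp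
  rw [this]
  gcongr
  linarith

theorem IsQuasiGeodesicOn.infDist_le (hq : IsQuasiGeodesicOn lam eps a b σ) (S : Set X) :
    ∀ u ∈ Icc a b, ∀ v ∈ Icc a b, infDist (σ v) S ≤ infDist (σ u) S + (lam * |u - v| + eps) := by
  intro u hu v hv
  have := (hq u hu v hv).2
  linarith [infDist_le_infDist_add_dist (x := σ v) (y := σ u) (s := S), dist_comm (σ u) (σ v)]

end QuasiGeodesic

theorem exists_le_add_and_lt_on_Ioc {f : ℝ → ℝ} {a t L R ε : ℝ} (hL : 0 ≤ L)
    (hf : ∀ u ∈ Icc a t, ∀ v ∈ Icc a t, f v ≤ f u + (L * |u - v| + ε)) (hat : a ≤ t)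
    (ha : f a ≤ R) : ∃ s ∈ Icc a t, f s ≤ R + ε ∧ ∀ u ∈ Ioc s t, R < f u := by
  set A := {u ∈ Icc a t | f u ≤ R}
  have hA : BddAbove A := ⟨t, fun u hu => hu.1.2⟩
  have haA : a ∈ A := ⟨⟨le_rfl, hat⟩, ha⟩
  have hs : sSup A ∈ Icc a t := ⟨le_csSup hA haA, csSup_le ⟨a, haA⟩ fun u hu => hu.1.2⟩
  refine ⟨sSup A, hs, le_of_forall_pos_le_add fun η hη => ?_, fun u hu => ?_⟩
  · have hρ : 0 < η / (L + 1) := by positivity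
    obtain ⟨u, huA, hu⟩ := exists_lt_of_lt_csSup ⟨a, haA⟩ (sub_lt_self (sSup A) hρ)
    have hus : u ≤ sSup A := le_csSup hA huA
    have hfu := hf u huA.1 (sSup A) hs
    rw [abs_sub_comm, abs_of_nonneg (sub_nonneg.2 hus)] at hfu
    have hLη : L * (sSup A - u) ≤ η :=
      calc L * (sSup A - u) ≤ L * (η / (L + 1)) := by gcongr; linarith
        _ ≤ η := by rw [mul_div_assoc', div_le_iff₀ (by positivity)]; nlinarith
    linarith [huA.2]
  · by_contra hle
    exact not_le.2 hu.1 (le_csSup hA ⟨⟨hs.1.trans hu.1.le, hu.2⟩, not_lt.1 hle⟩)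

theorem exists_le_add_and_lt_on_Ioo {f : ℝ → ℝ} {a b t L R ε : ℝ} (hL : 0 ≤ L)
    (hf : ∀ u ∈ Icc a b, ∀ v ∈ Icc a b, f v ≤ f u + (L * |u - v| + ε))
    (ha : f a ≤ R) (hb : f b ≤ R) (ht : t ∈ Icc a b) :
    ∃ s t', a ≤ s ∧ s ≤ t ∧ t ≤ t' ∧ t' ≤ b ∧ f s ≤ R + ε ∧ f t' ≤ R + ε ∧
      ∀ u ∈ Ioo s t', R < f u := by
  obtain ⟨s, hs, hfs, hleft⟩ := exists_le_add_and_lt_on_Ioc hL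
    (fun u hu v hv => hf u ⟨hu.1, hu.2.trans ht.2⟩ v ⟨hv.1, hv.2.trans ht.2⟩) ht.1 ha
  obtain ⟨s', hs', hfs', hright⟩ := exists_le_add_and_lt_on_Ioc (f := fun u => f (-u))
    (a := -b) (t := -t) hL
    (fun u hu v hv => by
      have := hf (-u) ⟨by linarith [hu.2, ht.1], by linarith [hu.1]⟩
        (-v) ⟨by linarith [hv.2, ht.1], by linarith [hv.1]⟩
      rwa [neg_sub_neg, abs_sub_comm] at this)
    (neg_le_neg ht.2) (by simpa using hb)
  refine ⟨s, -s', hs.1, hs.2, le_neg_of_le_neg hs'.2, neg_le.1 hs'.1, hfs, hfs', fun u hu => ?_⟩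
  rcases le_or_gt u t with hut | htu
  · exact hleft u ⟨hu.1, hut⟩
  · simpa using hright (-u) ⟨lt_neg_of_lt_neg hu.2, neg_le_neg htu.le⟩

theorem exists_nat_div_le_le_div_add_two {ℓ δ : ℝ} (hℓ : 0 < ℓ) (hδ : 0 < δ) :
    ∃ n : ℕ, 2 ≤ n ∧ ℓ / n ≤ δ ∧ (n : ℝ) ≤ ℓ / δ + 2 := by
  have hceil : 0 < ⌈ℓ / δ⌉₊ := Nat.ceil_pos.2 (div_pos hℓ hδ)
  refine ⟨⌈ℓ / δ⌉₊ + 1, by omega, ?_, ?_⟩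
  · rw [div_le_iff₀ (by positivity)]
    have := Nat.le_ceil (ℓ / δ)
    rw [div_le_iff₀ hδ] at this
    push_cast
    linarith
  · push_cast
    linarith [Nat.ceil_lt_add_one (div_pos hℓ hδ).le]

section Excursion

variable {X : Type*} [MetricSpace X] {S : Set X} {D lam eps a b δ s t : ℝ} {σ : ℝ → X}

theorem IsContractingSet.exists_dist_le_of_lt_infDist_on_Ioo (hS : IsContractingSet D S)
    (hproj : ∀ y, (projSet S y).Nonempty) (hq : IsQuasiGeodesicOn lam eps a b σ)
    (hlam : 0 ≤ lam) (hδ : 0 < δ) (has : a ≤ s) (hst : s < t) (htb : t ≤ b)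
    (hfar : ∀ u ∈ Ioo s t, lam * δ + eps < infDist (σ u) S) :
    ∃ n : ℕ, (n : ℝ) ≤ (t - s) / δ + 2 ∧
      dist (σ s) (σ t) ≤ infDist (σ s) S + n * D + infDist (σ t) S := by
  obtain ⟨n, hn2, hh, hn⟩ := exists_nat_div_le_le_div_add_two (sub_pos.2 hst) hδ
  set h := (t - s) / n
  have hn0 : (0 : ℝ) < n := by positivity
  have hh0 : 0 < h := div_pos (sub_pos.2 hst) hn0
  have hend : s + n * h = t := by simp only [h]; field_simp; ring
  have hmem : ∀ i ≤ n, s + i * h ∈ Icc a b := fun i hi => by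
    have : (i : ℝ) * h ≤ n * h := by gcongr
    constructor <;> linarith [mul_nonneg (Nat.cast_nonneg (α := ℝ) i) hh0.le]
  have hfar' : ∀ i, 0 < i → i < n → lam * δ + eps < infDist (σ (s + i * h)) S := by
    intro i hi0 hin
    have h1 : (1 : ℝ) * h ≤ i * h := by gcongr; exact_mod_cast hi0
    have h2 : (i : ℝ) * h < n * h := by gcongr
    exact hfar _ ⟨by linarith, by linarith⟩
  have hstep : ∀ i < n, dist (σ (s + i * h)) (σ (s + ((i + 1 : ℕ) : ℝ) * h)) <
      max (infDist (σ (s + i * h)) S) (infDist (σ (s + ((i + 1 : ℕ) : ℝ) * h)) S) := by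
    intro i hi
    have hdist : dist (σ (s + i * h)) (σ (s + ((i + 1 : ℕ) : ℝ) * h)) ≤ lam * δ + eps := by
      have := (hq _ (hmem i hi.le) _ (hmem (i + 1) hi)).2
      rw [show s + i * h - (s + ((i + 1 : ℕ) : ℝ) * h) = -h by push_cast; ring, abs_neg,
        abs_of_pos hh0] at this
      linarith [mul_le_mul_of_nonneg_left hh hlam]
    rcases Nat.eq_zero_or_pos i with rfl | hi0
    · exact hdist.trans_lt ((hfar' 1 one_pos (by omega)).trans_le (le_max_right _ _))
    · exact hdist.trans_lt ((hfar' i hi0 hi).trans_le (le_max_left _ _))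
  have hchain := hS.dist_le_of_chain hproj (x := fun i => σ (s + i * h)) hstep
  simp only [Nat.cast_zero, zero_mul, add_zero, hend] at hchain
  exact ⟨n, hn, hchain⟩

theorem IsContractingSet.sub_le_of_lt_infDist_on_Ioo {K : ℝ} (hS : IsContractingSet D S)
    (hD : 0 ≤ D) (hproj : ∀ y, (projSet S y).Nonempty) (hq : IsQuasiGeodesicOn lam eps a b σ)
    (hlam : 0 < lam) (heps : 0 ≤ eps) (hδ : 0 < δ) (hδD : 2 * lam * D ≤ δ)
    (has : a ≤ s) (hst : s ≤ t) (htb : t ≤ b)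
    (hKs : infDist (σ s) S ≤ K) (hKt : infDist (σ t) S ≤ K)
    (hfar : ∀ u ∈ Ioo s t, lam * δ + eps < infDist (σ u) S) :
    t - s ≤ 2 * lam * (2 * K + eps + 2 * D) := by
  have hK : 0 ≤ K := infDist_nonneg.trans hKs
  rcases hst.eq_or_lt with rfl | hlt
  · rw [sub_self]
    positivity
  obtain ⟨n, hn, hdist⟩ :=
    hS.exists_dist_le_of_lt_infDist_on_Ioo hproj hq hlam.le hδ has hlt htb hfar
  have hlen := hq.sub_le hlam ⟨has, hst.trans htb⟩ ⟨has.trans hst, htb⟩ hst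
  have hnD : lam * (n * D) ≤ lam * ((t - s) / δ * D) + 2 * lam * D :=
    calc lam * (n * D) ≤ lam * (((t - s) / δ + 2) * D) := by gcongr
      _ = lam * ((t - s) / δ * D) + 2 * lam * D := by ring
  have hhalf : lam * ((t - s) / δ * D) ≤ (t - s) / 2 := by
    rw [div_mul_eq_mul_div, mul_div_assoc', div_le_div_iff₀ hδ two_pos]
    nlinarith [mul_le_mul_of_nonneg_left hδD (sub_pos.2 hlt).le]
  have hbound : t - s ≤ lam * (2 * K + eps) + lam * (n * D) :=
    calc t - s ≤ lam * (dist (σ s) (σ t) + eps) := hlen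
      _ ≤ lam * (K + n * D + K + eps) := by gcongr; linarith
      _ = lam * (2 * K + eps) + lam * (n * D) := by ring
  linarith

end Excursion

def contractingMorseGauge (D lam eps : ℝ) : ℝ :=
  let R := lam * (2 * lam * max D 0 + 1) + eps
  R + 2 * eps + lam * (2 * lam * (2 * (R + eps) + eps + 2 * max D 0))

/-- Contracting implies Morse: in a proper geodesic space, a `D`-contracting geodesic ray is
`N`-Morse for a Morse gauge `N` depending only on `D`. -/
theorem morse_of_contracting (D : ℝ) :
    ∃ N : ℝ → ℝ → ℝ, ∀ (X : Type) [MetricSpace X],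
      ProperSpace X → GeodesicSpace X →
      ∀ γ : ℝ → X, IsGeodesicRay γ → IsContractingSet D (γ '' Set.Ici 0) →
        IsMorseRay N γ := by
  refine ⟨contractingMorseGauge D, fun X _ _ _ γ hγ hS => ⟨hγ, ?_⟩⟩
  intro lam eps hlam heps a b _ σ hq ha hb t ht
  set S := γ '' Ici 0
  set R := lam * (2 * lam * max D 0 + 1) + eps
  have hlam0 : 0 < lam := one_pos.trans_le hlam
  have hR : 0 ≤ R := by positivity
  have hproj := hγ.isClosed_image.projSet_nonempty ⟨γ 0, 0, self_mem_Ici, rfl⟩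
  have hf := hq.infDist_le S
  obtain ⟨s, t', has, hst, htt', ht'b, hs, ht', hfar⟩ := exists_le_add_and_lt_on_Ioo hlam0.le hf
    (R := R) (by rwa [infDist_zero_of_mem ha]) (by rwa [infDist_zero_of_mem hb]) ht
  have hlen := (hS.mono (le_max_left D 0)).sub_le_of_lt_infDist_on_Ioo
    (δ := 2 * lam * max D 0 + 1) (le_max_right D 0) hproj hq hlam0 heps (by positivity)
    (by linarith) has (hst.trans htt') ht'b hs ht' hfar
  have hts := hf s ⟨has, hst.trans ht.2⟩ t ht
  rw [abs_sub_comm, abs_of_nonneg (sub_nonneg.2 hst)] at hts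
  calc infDist (σ t) S ≤ infDist (σ s) S + (lam * (t - s) + eps) := hts
    _ ≤ R + eps + (lam * (t' - s) + eps) := by gcongr
    _ ≤ contractingMorseGauge D lam eps := by
      have := mul_le_mul_of_nonneg_left hlen hlam0.le
      simp only [contractingMorseGauge]
      linarith
end
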